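/- Let A be a symmetric 2n×2n real matrix satisfying the Cordes condition: 0 < 1/σ ≤ Σᵢⱼ a_{ij}² ≤ (1/(2n−1+ε))(Σᵢ a_{ii})² for some ε ∈ (0,1], σ > 0. Set α = (Σᵢ a_{ii})/(Σᵢⱼ a_{ij}²). Then for every symmetric 2n×2n matrix M, |tr(M) − α·⟨A, M⟩|² ≤ (1−ε)·‖M‖²_{HS}, where ⟨A,M⟩ = Σᵢⱼ a_{ij}m_{ij} and ‖M‖²_{HS} = Σᵢⱼ m_{ij}². -/

import Mathlib

/-!
Write `s = ∑ a_ij²` and `t = tr A`. Then `tr M - (t/s)⟨A, M⟩ = ⟨I - (t/s) A, M⟩`, and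
`I - (t/s) A` is the component of `I` orthogonal to `A`, so its squared norm is
`2n - t²/s` (Pythagoras). The Cordes condition says exactly that `t²/s ≥ 2n - 1 + ε`,
hence this squared norm is at most `1 - ε`, and Cauchy–Schwarz concludes.
-/

open Finset

namespace Matrix

variable {ι : Type*} [Fintype ι]

theorem sq_sum_sum_mul_le (B M : Matrix ι ι ℝ) :
    (∑ i, ∑ j, B i j * M i j) ^ 2 ≤ (∑ i, ∑ j, B i j ^ 2) * ∑ i, ∑ j, M i j ^ 2 := by
  simpa only [Fintype.sum_prod_type] using
    sum_mul_sq_le_sq_mul_sq univ (fun p : ι × ι => B p.1 p.2) (fun p => M p.1 p.2)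

variable [DecidableEq ι]

theorem trace_sub_mul_sum_sum_mul (A M : Matrix ι ι ℝ) (α : ℝ) :
    M.trace - α * ∑ i, ∑ j, A i j * M i j = ∑ i, ∑ j, (1 - α • A) i j * M i j := by
  simp only [sub_apply, smul_apply, one_apply, smul_eq_mul, sub_mul, ite_mul, one_mul,
    zero_mul, sum_sub_distrib, sum_ite_eq, mem_univ, if_true, mul_sum, mul_assoc, trace, diag]

theorem sum_sum_one_sub_smul_sq (A : Matrix ι ι ℝ) (α : ℝ) :
    ∑ i, ∑ j, (1 - α • A) i j ^ 2
      = Fintype.card ι - 2 * α * A.trace + α ^ 2 * ∑ i, ∑ j, A i j ^ 2 := by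
  have hexpand : ∀ i j, (1 - α • A) i j ^ 2 = (1 : Matrix ι ι ℝ) i j
      - 2 * α * ((1 : Matrix ι ι ℝ) i j * A i j) + α ^ 2 * A i j ^ 2 := by
    intro i j
    by_cases h : i = j <;> simp [one_apply, h] <;> ring
  simp only [hexpand, sum_add_distrib, sum_sub_distrib, ← mul_sum, one_apply, ite_mul, one_mul,
    zero_mul, sum_ite_eq, mem_univ, if_true, sum_const, card_univ, nsmul_eq_mul, mul_one,
    trace, diag]

theorem sum_sum_one_sub_div_smul_sq (A : Matrix ι ι ℝ) (hA : ∑ i, ∑ j, A i j ^ 2 ≠ 0) :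
    ∑ i, ∑ j, (1 - (A.trace / ∑ i, ∑ j, A i j ^ 2) • A) i j ^ 2
      = Fintype.card ι - A.trace ^ 2 / ∑ i, ∑ j, A i j ^ 2 := by
  rw [sum_sum_one_sub_smul_sq]
  field_simp
  ring

end Matrix

theorem sub_sq_div_le_of_le_one_div_mul_sq {d s t ε : ℝ} (hs : 0 < s)
    (h : s ≤ 1 / (d - 1 + ε) * t ^ 2) : d - t ^ 2 / s ≤ 1 - ε := by
  have hd : 0 < d - 1 + ε := by
    by_contra! hd
    nlinarith [one_div_nonpos.mpr hd, sq_nonneg t]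
  rw [div_mul_eq_mul_div, one_mul, le_div_iff₀ hd] at h
  have : d - 1 + ε ≤ t ^ 2 / s := by rw [le_div_iff₀ hs]; linarith
  linarith

theorem cordes_pointwise_general (n : ℕ) (ε σ : ℝ)
    (hσ : 0 < σ)
    (A M : Fin (2 * n) → Fin (2 * n) → ℝ)
    (hlow : 1 / σ ≤ ∑ i, ∑ j, (A i j)^2)
    (hcordes : ∑ i, ∑ j, (A i j)^2 ≤ (1 / (2 * (n : ℝ) - 1 + ε)) * (∑ i, A i i)^2) :
    ((∑ i, M i i) - ((∑ i, A i i) / (∑ i, ∑ j, (A i j)^2)) *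
        (∑ i, ∑ j, A i j * M i j))^2
      ≤ (1 - ε) * ∑ i, ∑ j, (M i j)^2 := by
  have hs : 0 < ∑ i, ∑ j, A i j ^ 2 := (one_div_pos.mpr hσ).trans_le hlow
  let B : Matrix (Fin (2 * n)) (Fin (2 * n)) ℝ :=
    1 - (Matrix.trace A / ∑ i, ∑ j, A i j ^ 2) • Matrix.of A
  have hB : ∑ i, ∑ j, B i j ^ 2 ≤ 1 - ε := by
    refine (Matrix.sum_sum_one_sub_div_smul_sq (Matrix.of A) hs.ne').trans_le ?_
    rw [Fintype.card_fin, Nat.cast_mul, Nat.cast_ofNat]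
    exact sub_sq_div_le_of_le_one_div_mul_sq hs hcordes
  calc _ = (∑ i, ∑ j, B i j * M i j) ^ 2 :=
        congrArg (· ^ 2) (Matrix.trace_sub_mul_sum_sum_mul (Matrix.of A) M _)
    _ ≤ (∑ i, ∑ j, B i j ^ 2) * ∑ i, ∑ j, M i j ^ 2 := Matrix.sq_sum_sum_mul_le B M
    _ ≤ (1 - ε) * ∑ i, ∑ j, M i j ^ 2 := by gcongr

/-- Pointwise Cordes inequality (formula (2.7) in Domokos–Manfredi). -/
theorem cordes_pointwise (n : ℕ) (hn : 1 ≤ n) (ε σ : ℝ) (hε0 : 0 < ε) (hε1 : ε ≤ 1)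
    (hσ : 0 < σ)
    (A M : Fin (2 * n) → Fin (2 * n) → ℝ)
    (hAsymm : ∀ i j, A i j = A j i) (hMsymm : ∀ i j, M i j = M j i)
    (hlow : 1 / σ ≤ ∑ i, ∑ j, (A i j)^2)
    (hcordes : ∑ i, ∑ j, (A i j)^2 ≤ (1 / (2 * (n : ℝ) - 1 + ε)) * (∑ i, A i i)^2) :
    ((∑ i, M i i) - ((∑ i, A i i) / (∑ i, ∑ j, (A i j)^2)) *
        (∑ i, ∑ j, A i j * M i j))^2
      ≤ (1 - ε) * ∑ i, ∑ j, (M i j)^2 :=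
  cordes_pointwise_general n ε σ hσ A M hlow hcordes
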